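/- arXiv:1809.00694 — 2 statements merged into one kernel-verified Lean document; each statement's English description precedes it below -/
import Mathlib

section
/- The concentration function φ of P₊ with respect to P₋ is a convex function on [0, 1]: for all x₁, x₂ ∈ [0, 1] and ν ∈ [0, 1], φ(ν x₁ + (1 − ν) x₂) ≤ ν φ(x₁) + (1 − ν) φ(x₂). -/
/-!
With `π c = ∫ (c - L)⁺ dP₋`, the formula for `φ` reads `φ x = c x - π c` at `c = q_x`, and every
affine function `y ↦ c y - π c` lies below `φ` on `[0, 1]`: at `y = 0` since `π c ≥ 0`, at `y = 1`
since `c - (c - L)⁺ ≤ L` and `∫ L dP₋ = 1`, and inside since `P₋(L < q_y) ≤ y ≤ P₋(L ≤ q_y)`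
makes `y` a subgradient of the convex function `π` at `q_y`. So `φ` has a supporting line at every
interior point of `[0, 1]`.
-/

open MeasureTheory Function Set Filter Topology ProbabilityTheory

theorem convexOn_Icc_of_forall_supporting_line {a b : ℝ} {f : ℝ → ℝ}
    (h : ∀ x ∈ Ioo a b, ∃ m, ∀ y ∈ Icc a b, f x + m * (y - x) ≤ f y) :
    ConvexOn ℝ (Icc a b) f := by
  refine convexOn_iff_pairwise_pos.2 ⟨convex_Icc a b, fun x hx y hy hxy s t hs ht hst => ?_⟩
  have hz : s • x + t • y ∈ Ioo a b := by
    have hseg : s • x + t • y ∈ openSegment ℝ x y := ⟨s, t, hs, ht, hst, rfl⟩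
    rw [openSegment_eq_Ioo' hxy] at hseg
    exact ⟨(le_min hx.1 hy.1).trans_lt hseg.1, hseg.2.trans_le (max_le hx.2 hy.2)⟩
  obtain ⟨m, hm⟩ := h _ hz
  have hzx := hm x hx
  have hzy := hm y hy
  simp only [smul_eq_mul] at *
  linear_combination s * hzx + t * hzy + (m * (s * x + t * y) - f (s * x + t * y)) * hst

theorem StieltjesFunction.mem_Icc_leftLim_sInf (f : StieltjesFunction ℝ) {x : ℝ}
    (hlo : ∃ y, f y < x) (hhi : ∃ y, x ≤ f y) :
    x ∈ Icc (leftLim f (sInf {y | x ≤ f y})) (f (sInf {y | x ≤ f y})) := by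
  obtain ⟨y₀, hy₀⟩ := hlo
  have hbdd : BddBelow {y | x ≤ f y} :=
    ⟨y₀, fun y hy => le_of_not_gt fun hlt => (hy.trans (f.mono hlt.le)).not_gt hy₀⟩
  constructor
  · refine le_of_tendsto (f.mono.tendsto_leftLim _) (eventually_nhdsWithin_of_forall fun y hy => ?_)
    exact le_of_lt (not_le.1 (notMem_of_lt_csInf (s := {y | x ≤ f y}) hy hbdd))
  · refine ge_of_tendsto ((f.right_continuous _).mono Ioi_subset_Ici_self)
      (eventually_nhdsWithin_of_forall fun y hy => ?_)
    obtain ⟨z, hz : x ≤ f z, hzy⟩ := exists_lt_of_csInf_lt hhi hy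
    exact hz.trans (f.mono hzy.le)

theorem leftLim_cdf (ν : Measure ℝ) [IsProbabilityMeasure ν] (c : ℝ) :
    leftLim (cdf ν) c = ν.real (Iio c) := by
  have h := (cdf ν).measure_Iio (tendsto_cdf_atBot ν) c
  rw [measure_cdf, sub_zero] at h
  rw [measureReal_def, h, ENNReal.toReal_ofReal
    ((cdf_nonneg ν (c - 1)).trans ((cdf ν).mono.le_leftLim (sub_one_lt c)))]

section RealRandomVariable

variable {Ω : Type*} [MeasurableSpace Ω] {μ : Measure Ω} {X : Ω → ℝ}

theorem cdf_map_apply [IsProbabilityMeasure μ] (hX : AEMeasurable X μ) (c : ℝ) :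
    cdf (μ.map X) c = μ.real {ω | X ω ≤ c} := by
  have := Measure.isProbabilityMeasure_map hX
  rw [cdf_eq_real, map_measureReal_apply_of_aemeasurable hX measurableSet_Iic]
  rfl

theorem leftLim_cdf_map [IsProbabilityMeasure μ] (hX : AEMeasurable X μ) (c : ℝ) :
    leftLim (cdf (μ.map X)) c = μ.real {ω | X ω < c} := by
  have := Measure.isProbabilityMeasure_map hX
  rw [leftLim_cdf, map_measureReal_apply_of_aemeasurable hX measurableSet_Iio]
  rfl

theorem mem_Icc_measureReal_sInf_cdf_map [IsProbabilityMeasure μ] (hX : AEMeasurable X μ)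
    {x : ℝ} (hx : x ∈ Ioo 0 1) :
    x ∈ Icc (μ.real {ω | X ω < sInf {y | x ≤ cdf (μ.map X) y}})
      (μ.real {ω | X ω ≤ sInf {y | x ≤ cdf (μ.map X) y}}) := by
  have := Measure.isProbabilityMeasure_map hX
  rw [← leftLim_cdf_map hX, ← cdf_map_apply hX]
  exact (cdf _).mem_Icc_leftLim_sInf
    ((tendsto_cdf_atBot _).eventually (gt_mem_nhds hx.1)).exists
    (((tendsto_cdf_atTop _).eventually (lt_mem_nhds hx.2)).exists.imp fun _ => le_of_lt)

theorem integrable_max_sub_zero [IsFiniteMeasure μ] (hXi : Integrable X μ) (c : ℝ) :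
    Integrable (fun ω => max (c - X ω) 0) μ :=
  ((integrable_const c).sub hXi).pos_part

theorem integral_max_sub_zero_eq [IsFiniteMeasure μ] (hX : Measurable X) (hXi : Integrable X μ)
    (c : ℝ) :
    ∫ ω, max (c - X ω) 0 ∂μ = c * μ.real {ω | X ω < c} - ∫ ω in {ω | X ω < c}, X ω ∂μ := by
  have hs : MeasurableSet {ω | X ω < c} := hX measurableSet_Iio
  have hind : (fun ω => max (c - X ω) 0) = {ω | X ω < c}.indicator fun ω => c - X ω := by
    ext ω
    by_cases h : X ω < c
    · simp [indicator_of_mem (show ω ∈ {ω | X ω < c} from h), h.le]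
    · simp [h, not_lt.1 h]
  rw [hind, integral_indicator hs, integral_sub (integrable_const c).integrableOn hXi.integrableOn,
    setIntegral_const, smul_eq_mul, mul_comm]

theorem integral_max_sub_zero_add_mul_le [IsFiniteMeasure μ] (hX : Measurable X)
    (hXi : Integrable X μ) {c d y : ℝ} (hlo : μ.real {ω | X ω < d} ≤ y)
    (hhi : y ≤ μ.real {ω | X ω ≤ d}) :
    ∫ ω, max (d - X ω) 0 ∂μ + (c - d) * y ≤ ∫ ω, max (c - X ω) 0 ∂μ := by
  have key : ∀ s, MeasurableSet s → s ⊆ {ω | X ω ≤ d} → {ω | X ω < d} ⊆ s →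
      (c - d) * μ.real s ≤ ∫ ω, max (c - X ω) 0 ∂μ - ∫ ω, max (d - X ω) 0 ∂μ := by
    intro s hs hsle hlts
    rw [← integral_sub (integrable_max_sub_zero hXi c) (integrable_max_sub_zero hXi d),
      mul_comm, ← smul_eq_mul, ← integral_indicator_const _ hs]
    refine integral_mono ((integrable_const _).indicator hs)
      ((integrable_max_sub_zero hXi c).sub (integrable_max_sub_zero hXi d)) fun ω => ?_
    by_cases hω : ω ∈ s
    · have : X ω ≤ d := hsle hω
      simp only [indicator_of_mem hω, max_eq_left (sub_nonneg.2 this)]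
      linarith [le_max_left (c - X ω) 0]
    · have : d ≤ X ω := not_lt.1 fun h => hω (hlts h)
      simp only [indicator_of_notMem hω, max_eq_right (sub_nonpos.2 this)]
      linarith [le_max_right (c - X ω) 0]
  rcases le_total d c with hdc | hcd
  · have := key {ω | X ω ≤ d} (hX measurableSet_Iic) subset_rfl fun ω (h : X ω < d) => h.le
    nlinarith
  · have := key {ω | X ω < d} (hX measurableSet_Iio) (fun ω (h : X ω < d) => h.le) subset_rfl
    nlinarith

theorem sub_integral_max_sub_zero_le [IsProbabilityMeasure μ] (hXi : Integrable X μ) (c : ℝ) :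
    c - ∫ ω, max (c - X ω) 0 ∂μ ≤ ∫ ω, X ω ∂μ := by
  have h := integral_mono (f := fun ω => c - max (c - X ω) 0)
    ((integrable_const c).sub (integrable_max_sub_zero hXi c)) hXi
    fun ω => by linarith [le_max_left (c - X ω) 0]
  rwa [integral_sub (integrable_const c) (integrable_max_sub_zero hXi c), integral_const,
    probReal_univ, one_smul] at h

end RealRandomVariable

theorem concentration_convex_general
    {Ω : Type*} [MeasurableSpace Ω]
    (Pm Pp : Measure Ω) [IsProbabilityMeasure Pm] [IsProbabilityMeasure Pp]
    (L : Ω → ℝ) (hLmeas : Measurable L)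
    (hRN : ∀ s : Set Ω, MeasurableSet s → (Pp s).toReal = ∫ ω in s, L ω ∂Pm)
    (Hm : ℝ → ℝ) (hHm : ∀ l, Hm l = (Pm {ω | L ω ≤ l}).toReal)
    (q : ℝ → ℝ) (hq : ∀ t, q t = sInf {y : ℝ | t ≤ Hm y})
    (φ : ℝ → ℝ)
    (hφ0 : φ 0 = 0) (hφ1 : φ 1 = 1)
    (hφ : ∀ x ∈ Set.Ioo (0 : ℝ) 1,
        φ x = (Pp {ω | L ω < q x}).toReal + q x * (x - leftLim Hm (q x))) :
    ∀ x₁ ∈ Set.Icc (0 : ℝ) 1, ∀ x₂ ∈ Set.Icc (0 : ℝ) 1, ∀ ν ∈ Set.Icc (0 : ℝ) 1,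
      φ (ν * x₁ + (1 - ν) * x₂) ≤ ν * φ x₁ + (1 - ν) * φ x₂ := by
  have hL_integral : ∫ ω, L ω ∂Pm = 1 := by simpa using (hRN univ MeasurableSet.univ).symm
  have hL_integrable : Integrable L Pm := .of_integral_ne_zero (by simp [hL_integral])
  have hHm_cdf : Hm = cdf (Pm.map L) :=
    funext fun l => (hHm l).trans (cdf_map_apply hLmeas.aemeasurable l).symm
  subst hHm_cdf
  have hφ_eq : ∀ x ∈ Ioo (0 : ℝ) 1, φ x = q x * x - ∫ ω, max (q x - L ω) 0 ∂Pm := by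
    intro x hx
    rw [hφ x hx, hRN {ω | L ω < q x} (hLmeas measurableSet_Iio),
      leftLim_cdf_map hLmeas.aemeasurable, integral_max_sub_zero_eq hLmeas hL_integrable (q x)]
    ring
  have hφ_ge : ∀ c, ∀ y ∈ Icc (0 : ℝ) 1, c * y - ∫ ω, max (c - L ω) 0 ∂Pm ≤ φ y := by
    intro c y hy
    rcases hy.1.eq_or_lt with rfl | hy0
    · simpa [hφ0] using integral_nonneg fun ω => le_max_right (c - L ω) 0
    rcases hy.2.eq_or_lt with rfl | hy1
    · simpa [hφ1, hL_integral] using sub_integral_max_sub_zero_le hL_integrable c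
    obtain ⟨hlo, hhi⟩ :=
      mem_Icc_measureReal_sInf_cdf_map (μ := Pm) hLmeas.aemeasurable ⟨hy0, hy1⟩
    rw [← hq] at hlo hhi
    linarith [hφ_eq y ⟨hy0, hy1⟩,
      integral_max_sub_zero_add_mul_le (c := c) hLmeas hL_integrable hlo hhi]
  have hconvex : ConvexOn ℝ (Icc 0 1) φ :=
    convexOn_Icc_of_forall_supporting_line fun x hx =>
      ⟨q x, fun y hy => by linarith [hφ_eq x hx, hφ_ge (q x) y hy]⟩
  intro x₁ hx₁ x₂ hx₂ ν hν
  simpa using hconvex.2 hx₁ hx₂ hν.1 (sub_nonneg.2 hν.2) (add_sub_cancel ν 1)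

/-- The concentration function `φ` of `P₊` with respect to `P₋` is
convex on `[0,1]`: for all `x₁, x₂ ∈ [0,1]` and `ν ∈ [0,1]`,
`φ(ν x₁ + (1-ν) x₂) ≤ ν φ(x₁) + (1-ν) φ(x₂)`. -/
theorem concentration_convex
    {Ω : Type*} [MeasurableSpace Ω]
    (Pm Pp : Measure Ω) [IsProbabilityMeasure Pm] [IsProbabilityMeasure Pp]
    (hac : Pp ≪ Pm) (hac' : Pm ≪ Pp)
    (L : Ω → ℝ) (hLmeas : Measurable L)
    (hLpos : ∀ᵐ ω ∂Pm, 0 < L ω)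
    (hRN : ∀ s : Set Ω, MeasurableSet s → (Pp s).toReal = ∫ ω in s, L ω ∂Pm)
    (Hm : ℝ → ℝ) (hHm : ∀ l, Hm l = (Pm {ω | L ω ≤ l}).toReal)
    (q : ℝ → ℝ) (hq : ∀ t, q t = sInf {y : ℝ | t ≤ Hm y})
    (φ : ℝ → ℝ)
    (hφ0 : φ 0 = 0) (hφ1 : φ 1 = 1)
    (hφ : ∀ x ∈ Set.Ioo (0 : ℝ) 1,
        φ x = (Pp {ω | L ω < q x}).toReal + q x * (x - leftLim Hm (q x))) :
    ∀ x₁ ∈ Set.Icc (0 : ℝ) 1, ∀ x₂ ∈ Set.Icc (0 : ℝ) 1, ∀ ν ∈ Set.Icc (0 : ℝ) 1,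
      φ (ν * x₁ + (1 - ν) * x₂) ≤ ν * φ x₁ + (1 - ν) * φ x₂ :=
  concentration_convex_general Pm Pp L hLmeas hRN Hm hHm q hq φ hφ0 hφ1 hφ
end

section
/- Let P₋ be a probability measure on the nonnegative real line with P₋({0}) = 0 and finite positive mean m = ∫ t dP₋(t), and let P₊ be its length-biased version, i.e. the probability measure with density t/m with respect to P₋. Then for every x ∈ [0, 1], 1 − ROC(1 − x) = λ(x), where λ(x) = (1/m) ∫₀ˣ Q(u) du is the Lorenz–Gini curve of P₋, with Q(u) = inf{y ∈ ℝ : P₋((−∞, y]) ≥ u} the quantile function of P₋, and ROC is the LR-based ROC function of the pair (P₋, P₊). -/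
open MeasureTheory Function Set intervalIntegral
open ProbabilityTheory Filter Pointwise

/-!
Write `F` for the distribution function of `P₋` and `Q` for its quantile function. Since
`L(t) = t/m`, the quantile `q` of `H₋` is `Q/m`, `H₋(q(x)) = F(a)` and
`m H₊(q(x)) = ∫_{t ≤ a} t dP₋` with `a = Q(x)`, so for `0 < x < 1` the claim becomes
`∫₀ˣ Q = ∫_{t ≤ a} t dP₋ + a (x - F(a))`. Both sides are computed by the layer cake formula.
On `(0, 1)` we have `s < Q(u) ↔ F(s) < u`, so the left side is `∫₀^∞ (x - F(s))⁺ ds`; on the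
right, `P₋((s, a]) = (x - F(s))⁺ + (F(a) - x)` for `s < a` and `0` otherwise. At `x = 1` the same
computation gives `∫₀¹ Q = m`.
-/

noncomputable def quantile (μ : Measure ℝ) (u : ℝ) : ℝ := sInf {y | u ≤ cdf μ y}

theorem Real.sInf_preimage_mul_const {c : ℝ} (hc : 0 < c) (S : Set ℝ) :
    sInf ((· * c) ⁻¹' S) = sInf S / c := by
  have : (· * c) ⁻¹' S = c⁻¹ • S := by
    simp_rw [mul_comm _ c]
    exact preimage_smul₀ hc.ne' S
  rw [this, Real.sInf_smul_of_nonneg (inv_nonneg.2 hc.le), smul_eq_mul, inv_mul_eq_div]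

section Quantile

variable (μ : Measure ℝ) {u s x : ℝ}

theorem bddBelow_setOf_le_cdf (hu : 0 < u) : BddBelow {y | u ≤ cdf μ y} := by
  obtain ⟨y₀, hy₀⟩ := eventually_atBot.1 ((tendsto_cdf_atBot μ).eventually (gt_mem_nhds hu))
  refine ⟨y₀, fun y (hy : u ≤ cdf μ y) => ?_⟩
  by_contra! h
  exact (hy₀ y h.le).not_ge hy

theorem nonempty_setOf_le_cdf (hu : u < 1) : {y | u ≤ cdf μ y}.Nonempty :=
  ((tendsto_cdf_atTop μ).eventually (eventually_ge_nhds hu)).exists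

variable {μ}

theorem quantile_le_iff (hu₀ : 0 < u) (hu₁ : u < 1) : quantile μ u ≤ s ↔ u ≤ cdf μ s := by
  refine ⟨fun h => ?_, fun h => csInf_le (bddBelow_setOf_le_cdf μ hu₀) h⟩
  have hright : ∀ y ∈ Ioi s, u ≤ cdf μ y := fun y hy => by
    obtain ⟨z, hz, hzy⟩ := exists_lt_of_csInf_lt (nonempty_setOf_le_cdf μ hu₁) (h.trans_lt hy)
    exact le_trans hz (monotone_cdf μ hzy.le)
  exact ge_of_tendsto (((cdf μ).right_continuous s).mono Ioi_subset_Ici_self)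
    (eventually_nhdsWithin_of_forall hright)

theorem lt_quantile_iff (hu₀ : 0 < u) (hu₁ : u < 1) : s < quantile μ u ↔ cdf μ s < u := by
  simpa only [not_le] using (quantile_le_iff hu₀ hu₁).not

theorem monotoneOn_quantile : MonotoneOn (quantile μ) (Ioo 0 1) := fun _ hu _ hv huv =>
  (quantile_le_iff hu.1 hu.2).2 (huv.trans ((quantile_le_iff hv.1 hv.2).1 le_rfl))

theorem cdf_eq_zero_of_neg [IsProbabilityMeasure μ] (hμ : μ (Iio 0) = 0) (hs : s < 0) :
    cdf μ s = 0 := by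
  rw [cdf_eq_real, measureReal_def, measure_mono_null (Iic_subset_Iio.2 hs) hμ,
    ENNReal.toReal_zero]

theorem quantile_nonneg [IsProbabilityMeasure μ] (hμ : μ (Iio 0) = 0) (hu : 0 < u) :
    0 ≤ quantile μ u :=
  Real.sInf_nonneg fun y (hy : u ≤ cdf μ y) => by
    by_contra! h
    exact (hy.trans_eq (cdf_eq_zero_of_neg hμ h)).not_gt hu

theorem ae_nonneg_of_measure_Iio_eq_zero (hμ : μ (Iio 0) = 0) : 0 ≤ᵐ[μ] fun t => t :=
  (measure_eq_zero_iff_ae_notMem.1 hμ).mono fun _ ht => not_lt.1 ht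

theorem integral_quantile_eq_toReal_lintegral [IsProbabilityMeasure μ] (hμ : μ (Iio 0) = 0)
    (hx₀ : 0 < x) (hx₁ : x ≤ 1) :
    ∫ u in 0..x, quantile μ u = (∫⁻ s in Ioi 0, ENNReal.ofReal (x - cdf μ s)).toReal := by
  have hmeas : AEMeasurable (quantile μ) (volume.restrict (Ioo 0 x)) :=
    (aemeasurable_restrict_of_monotoneOn measurableSet_Ioo monotoneOn_quantile).mono_measure
      (Measure.restrict_mono (Ioo_subset_Ioo_right hx₁) le_rfl)
  have hnonneg : 0 ≤ᵐ[volume.restrict (Ioo 0 x)] quantile μ := by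
    filter_upwards [ae_restrict_mem measurableSet_Ioo] with u hu
    exact quantile_nonneg hμ hu.1
  have hlevel : ∀ s, {u | s < quantile μ u} ∩ Ioo 0 x = Ioo (cdf μ s) x := fun s => by
    ext u
    constructor
    · rintro ⟨hsu, hu₀, hux⟩
      exact ⟨(lt_quantile_iff hu₀ (hux.trans_le hx₁)).1 hsu, hux⟩
    · rintro ⟨hsu, hux⟩
      have hu₀ : 0 < u := (cdf_nonneg μ s).trans_lt hsu
      exact ⟨(lt_quantile_iff hu₀ (hux.trans_le hx₁)).2 hsu, hu₀, hux⟩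
  rw [intervalIntegral.integral_of_le hx₀.le, integral_Ioc_eq_integral_Ioo,
    integral_eq_lintegral_of_nonneg_ae hnonneg hmeas.aestronglyMeasurable,
    lintegral_eq_lintegral_meas_lt _ hnonneg hmeas]
  congr 1
  refine setLIntegral_congr_fun measurableSet_Ioi fun s _ => ?_
  rw [Measure.restrict_apply' measurableSet_Ioo, hlevel, Real.volume_Ioo]

theorem integral_eq_toReal_lintegral_one_sub_cdf [IsProbabilityMeasure μ]
    (hμ : μ (Iio 0) = 0) :
    ∫ t, t ∂μ = (∫⁻ s in Ioi 0, ENNReal.ofReal (1 - cdf μ s)).toReal := by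
  have hnonneg := ae_nonneg_of_measure_Iio_eq_zero hμ
  rw [integral_eq_lintegral_of_nonneg_ae hnonneg aestronglyMeasurable_id,
    lintegral_eq_lintegral_meas_lt _ hnonneg aemeasurable_id]
  congr 1
  refine setLIntegral_congr_fun measurableSet_Ioi fun s _ => ?_
  change μ (Ioi s) = _
  rw [← compl_Iic, prob_compl_eq_one_sub measurableSet_Iic, ← ofReal_cdf, ← ENNReal.ofReal_one,
    ← ENNReal.ofReal_sub _ (cdf_nonneg μ s)]

theorem integral_quantile_zero_one [IsProbabilityMeasure μ] (hμ : μ (Iio 0) = 0) :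
    ∫ u in 0..1, quantile μ u = ∫ t, t ∂μ := by
  rw [integral_quantile_eq_toReal_lintegral hμ one_pos le_rfl,
    integral_eq_toReal_lintegral_one_sub_cdf hμ]

theorem lintegral_Iic_eq_lintegral_measure_Ioc (hμ : μ (Iio 0) = 0) (a : ℝ) :
    ∫⁻ t in Iic a, ENNReal.ofReal t ∂μ = ∫⁻ s in Ioi 0, μ (Ioc s a) := by
  have hnonneg := ae_restrict_of_ae (s := Iic a) (ae_nonneg_of_measure_Iio_eq_zero hμ)
  rw [lintegral_eq_lintegral_meas_lt _ hnonneg aemeasurable_id]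
  refine setLIntegral_congr_fun measurableSet_Ioi fun s _ => ?_
  rw [Measure.restrict_apply' measurableSet_Iic]
  rfl

theorem measure_Ioc_quantile [IsProbabilityMeasure μ] (hx₀ : 0 < x) (hx₁ : x < 1) (s : ℝ) :
    μ (Ioc s (quantile μ x)) = ENNReal.ofReal (x - cdf μ s) +
      (Iio (quantile μ x)).indicator (fun _ => ENNReal.ofReal (cdf μ (quantile μ x) - x)) s := by
  set a := quantile μ x
  have hxa : x ≤ cdf μ a := (quantile_le_iff hx₀ hx₁).1 le_rfl
  rcases lt_or_ge s a with hsa | has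
  · have hsx : cdf μ s < x := (lt_quantile_iff hx₀ hx₁).1 hsa
    rw [indicator_of_mem (mem_Iio.2 hsa), ← ENNReal.ofReal_add (by linarith) (by linarith),
      sub_add_sub_cancel', ← (cdf μ).measure_Ioc, measure_cdf]
  · have hxs : x ≤ cdf μ s := hxa.trans (monotone_cdf μ has)
    rw [indicator_of_notMem (notMem_Iio.2 has), Ioc_eq_empty (not_lt.2 has), measure_empty,
      add_zero, ENNReal.ofReal_of_nonpos (by linarith)]

theorem integral_quantile_eq [IsProbabilityMeasure μ] (hμ : μ (Iio 0) = 0)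
    (hx₀ : 0 < x) (hx₁ : x < 1) :
    ∫ u in 0..x, quantile μ u =
      ∫ t in Iic (quantile μ x), t ∂μ + quantile μ x * (x - cdf μ (quantile μ x)) := by
  set a := quantile μ x
  have ha : 0 ≤ a := quantile_nonneg hμ hx₀
  have hxa : x ≤ cdf μ a := (quantile_le_iff hx₀ hx₁).1 le_rfl
  have hsplit : ∫⁻ t in Iic a, ENNReal.ofReal t ∂μ =
      (∫⁻ s in Ioi 0, ENNReal.ofReal (x - cdf μ s)) +
        ENNReal.ofReal (cdf μ a - x) * ENNReal.ofReal a := by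
    rw [lintegral_Iic_eq_lintegral_measure_Ioc hμ,
      lintegral_congr fun s => measure_Ioc_quantile hx₀ hx₁ s,
      lintegral_add_right _ (measurable_const.indicator measurableSet_Iio),
      lintegral_indicator measurableSet_Iio, setLIntegral_const,
      Measure.restrict_apply' measurableSet_Ioi, Iio_inter_Ioi, Real.volume_Ioo, sub_zero]
  have hfinite : ∫⁻ t in Iic a, ENNReal.ofReal t ∂μ ≠ ⊤ :=
    (setLIntegral_lt_top_of_le_nnreal (measure_ne_top _ _)
      ⟨a.toNNReal, fun _ ht => ENNReal.ofReal_le_ofReal ht⟩).ne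
  rw [hsplit] at hfinite
  have hnonneg := ae_restrict_of_ae (s := Iic a) (ae_nonneg_of_measure_Iio_eq_zero hμ)
  rw [integral_quantile_eq_toReal_lintegral hμ hx₀ hx₁.le,
    integral_eq_lintegral_of_nonneg_ae hnonneg aestronglyMeasurable_id, hsplit,
    ENNReal.toReal_add (ENNReal.add_ne_top.1 hfinite).1 (ENNReal.add_ne_top.1 hfinite).2,
    ENNReal.toReal_mul, ENNReal.toReal_ofReal (by linarith), ENNReal.toReal_ofReal ha]
  ring

end Quantile

theorem roc_and_lorenz_gini_general
    (Pm Pp : Measure ℝ) [IsProbabilityMeasure Pm]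
    (hsupp : Pm {t : ℝ | t < 0} = 0)
    (m : ℝ) (hm : m = ∫ t, t ∂Pm) (hmpos : 0 < m)
    (hRN : ∀ s : Set ℝ, MeasurableSet s → (Pp s).toReal = ∫ t in s, t / m ∂Pm)
    (L : ℝ → ℝ) (hL : ∀ t, L t = t / m)
    (Hm Hp : ℝ → ℝ)
    (hHm : ∀ l, Hm l = (Pm {t | L t ≤ l}).toReal)
    (hHp : ∀ l, Hp l = (Pp {t | L t ≤ l}).toReal)
    (q : ℝ → ℝ) (hq : ∀ t, q t = sInf {y : ℝ | t ≤ Hm y})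
    (ROC : ℝ → ℝ)
    (hROC0 : ROC 0 = 0) (hROC1 : ROC 1 = 1)
    (hROC : ∀ x ∈ Set.Ioo (0 : ℝ) 1,
        ROC x = 1 - Hp (q (1 - x)) + q (1 - x) * (Hm (q (1 - x)) - (1 - x)))
    (Q : ℝ → ℝ) (hQ : ∀ u, Q u = sInf {y : ℝ | u ≤ (Pm (Set.Iic y)).toReal})
    (lam : ℝ → ℝ) (hlam : ∀ x, lam x = (1 / m) * ∫ u in (0 : ℝ)..x, Q u) :
    ∀ x ∈ Set.Icc (0 : ℝ) 1, 1 - ROC (1 - x) = lam x := by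
  have hQ' : Q = quantile Pm := funext fun u => by
    simp only [hQ, quantile, cdf_eq_real, measureReal_def]
  have hlevel : ∀ l, {t | L t ≤ l} = Iic (l * m) := fun l => by
    ext t
    simp only [mem_ofPred_eq, hL, mem_Iic, div_le_iff₀ hmpos]
  have hHm' : ∀ l, Hm l = cdf Pm (l * m) := fun l => by
    rw [hHm, hlevel, cdf_eq_real, measureReal_def]
  have hHp' : ∀ l, Hp l = (∫ t in Iic (l * m), t ∂Pm) / m := fun l => by
    rw [hHp, hlevel, hRN _ measurableSet_Iic, MeasureTheory.integral_div]
  have hq' : ∀ t, q t = quantile Pm t / m := fun t => by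
    rw [hq, quantile, ← Real.sInf_preimage_mul_const hmpos]
    simp only [hHm', preimage_ofPred_eq]
  rintro x ⟨hx₀, hx₁⟩
  rcases hx₀.eq_or_lt with rfl | hx₀
  · simp [hROC1, hlam]
  rcases hx₁.eq_or_lt with rfl | hx₁
  · rw [sub_self, hROC0, hlam, hQ', integral_quantile_zero_one hsupp, ← hm]
    simp [hmpos.ne']
  rw [hROC (1 - x) ⟨by linarith, by linarith⟩, sub_sub_cancel, hlam, hQ',
    integral_quantile_eq hsupp hx₀ hx₁, hq', hHm', hHp', div_mul_cancel₀ _ hmpos.ne']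
  field_simp
  ring

/-- If `P₋` is a probability measure on the nonnegative real line with
`P₋({0}) = 0` and finite positive mean `m`, and `P₊` is its length-biased version
(density `t/m` with respect to `P₋`), then `1 - ROC(1-x) = λ(x)` for all `x ∈ [0,1]`,
where `λ` is the Lorenz–Gini curve of `P₋` and `ROC` is the LR-based ROC function of
the pair `(P₋, P₊)` (whose likelihood ratio is `L(t) = t/m`). -/
theorem roc_and_lorenz_gini
    (Pm Pp : Measure ℝ) [IsProbabilityMeasure Pm] [IsProbabilityMeasure Pp]
    (hsupp : Pm {t : ℝ | t < 0} = 0) (h0 : Pm {(0 : ℝ)} = 0)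
    (hint : Integrable (fun t : ℝ => t) Pm)
    (m : ℝ) (hm : m = ∫ t, t ∂Pm) (hmpos : 0 < m)
    (hRN : ∀ s : Set ℝ, MeasurableSet s → (Pp s).toReal = ∫ t in s, t / m ∂Pm)
    (L : ℝ → ℝ) (hL : ∀ t, L t = t / m)
    (Hm Hp : ℝ → ℝ)
    (hHm : ∀ l, Hm l = (Pm {t | L t ≤ l}).toReal)
    (hHp : ∀ l, Hp l = (Pp {t | L t ≤ l}).toReal)
    (q : ℝ → ℝ) (hq : ∀ t, q t = sInf {y : ℝ | t ≤ Hm y})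
    (ROC : ℝ → ℝ)
    (hROC0 : ROC 0 = 0) (hROC1 : ROC 1 = 1)
    (hROC : ∀ x ∈ Set.Ioo (0 : ℝ) 1,
        ROC x = 1 - Hp (q (1 - x)) + q (1 - x) * (Hm (q (1 - x)) - (1 - x)))
    (Q : ℝ → ℝ) (hQ : ∀ u, Q u = sInf {y : ℝ | u ≤ (Pm (Set.Iic y)).toReal})
    (lam : ℝ → ℝ) (hlam : ∀ x, lam x = (1 / m) * ∫ u in (0 : ℝ)..x, Q u) :
    ∀ x ∈ Set.Icc (0 : ℝ) 1, 1 - ROC (1 - x) = lam x :=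
  roc_and_lorenz_gini_general Pm Pp hsupp m hm hmpos hRN L hL Hm Hp hHm hHp q hq ROC hROC0 hROC1
    hROC Q hQ lam hlam
end
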